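/- Let ξ be a purely imaginary unit octonion orthogonal to i, and set r_ξ = (1+i)(1+ξ)/2. Then r_ξ is a unit octonion and r_ξ · i · conj(r_ξ) = ξ. -/

import Mathlib

/-- The octonions, as the Cayley–Dickson double of the quaternions:
pairs `(a, b)` of quaternions with `(a,b)(u,v) = (au - v̄ b, b ū + v a)`. -/
@[ext] structure Oct where
  x : Quaternion ℝ
  y : Quaternion ℝ

namespace Oct

noncomputable instance : Zero Oct := ⟨⟨0, 0⟩⟩
noncomputable instance : One Oct := ⟨⟨1, 0⟩⟩
noncomputable instance : Add Oct := ⟨fun p q => ⟨p.x + q.x, p.y + q.y⟩⟩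
noncomputable instance : Neg Oct := ⟨fun p => ⟨-p.x, -p.y⟩⟩
noncomputable instance : Sub Oct := ⟨fun p q => p + -q⟩
noncomputable instance : Mul Oct := ⟨fun p q => ⟨p.x * q.x - star q.y * p.y, p.y * star q.x + q.y * p.x⟩⟩
noncomputable instance : SMul ℝ Oct := ⟨fun t p => ⟨t • p.x, t • p.y⟩⟩

/-- Octonion conjugation: `(a, b)̄ = (ā, -b)`. -/
noncomputable def conj (p : Oct) : Oct := ⟨star p.x, -p.y⟩

/-- The real part of an octonion. -/
noncomputable def re (p : Oct) : ℝ := p.x.re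

/-- The Euclidean inner product on the octonions: `⟨p, q⟩ = Re (p q̄)`. -/
noncomputable def inner (p q : Oct) : ℝ := (p * conj q).re

/-- The squared norm of an octonion. -/
noncomputable def normSq (p : Oct) : ℝ := inner p p

/-- The basic imaginary unit `i` of the octonions. -/
noncomputable def i : Oct := ⟨⟨0, 1, 0, 0⟩, 0⟩

/-- The inverse of an octonion: `r⁻¹ = r̄ / |r|²`. -/
noncomputable def inv (p : Oct) : Oct := (normSq p)⁻¹ • conj p

end Oct

/-! In Cayley–Dickson coordinates `ξ = (a, b)` one has `r_ξ = (x, y)` with `x = (1 + i)(1 + a)/2`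
and `y = b(1 + i)/2`, and conjugating a pure imaginary quaternion `u` by `(x, y)` gives
`(x u x̄ - |y|² u, -y (u x + x u))`. Since `a` is pure imaginary and orthogonal to `i`, it
anticommutes with `i`; this yields `x i x̄ = a + (1 - |a|²)/2 · i` and `i x + x i = i - 1`, so that
`|a|² + |b|² = 1` gives `r_ξ i r̄_ξ = (a, b)`. Likewise `|r_ξ|² = (1 + |a|²)/2 + |b|²/2 = 1`. -/

open scoped Quaternion

namespace Oct

@[simp] lemma mul_x (p q : Oct) : (p * q).x = p.x * q.x - star q.y * p.y := rfl
@[simp] lemma mul_y (p q : Oct) : (p * q).y = p.y * star q.x + q.y * p.x := rfl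
@[simp] lemma add_x (p q : Oct) : (p + q).x = p.x + q.x := rfl
@[simp] lemma add_y (p q : Oct) : (p + q).y = p.y + q.y := rfl
@[simp] lemma one_x : (1 : Oct).x = 1 := rfl
@[simp] lemma one_y : (1 : Oct).y = 0 := rfl
@[simp] lemma smul_x (t : ℝ) (p : Oct) : (t • p).x = t • p.x := rfl
@[simp] lemma smul_y (t : ℝ) (p : Oct) : (t • p).y = t • p.y := rfl
@[simp] lemma conj_x (p : Oct) : (conj p).x = star p.x := rfl
@[simp] lemma conj_y (p : Oct) : (conj p).y = -p.y := rfl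

def qi : ℍ[ℝ] := ⟨0, 1, 0, 0⟩

@[simp] lemma qi_re : qi.re = 0 := rfl
@[simp] lemma qi_imI : qi.imI = 1 := rfl
@[simp] lemma qi_imJ : qi.imJ = 0 := rfl
@[simp] lemma qi_imK : qi.imK = 0 := rfl

lemma star_qi : star qi = -qi := by
  ext <;> simp

lemma i_eq_mk : i = ⟨qi, 0⟩ := rfl

@[simp] lemma i_x : i.x = qi := rfl
@[simp] lemma i_y : i.y = 0 := rfl

lemma normSq_eq (p : Oct) : normSq p = Quaternion.normSq p.x + Quaternion.normSq p.y := by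
  simp [normSq, inner, re, Quaternion.self_mul_star, Quaternion.star_mul_self]

lemma inner_i (p : Oct) : inner p i = p.x.imI := by
  simp [inner, re]

lemma mul_mul_conj_of_star_eq_neg (p : Oct) {u : ℍ[ℝ]} (hu : star u = -u) :
    p * ⟨u, 0⟩ * conj p =
      ⟨p.x * u * star p.x - Quaternion.normSq p.y • u, -(p.y * (u * p.x + p.x * u))⟩ := by
  ext1
  · simp [hu, mul_assoc, ← mul_assoc (star p.y), Quaternion.star_mul_self,
      Quaternion.coe_mul_eq_smul]
  · simp only [mul_y, hu, mul_neg, zero_mul, add_zero, conj_x, star_star, neg_mul, conj_y, mul_x,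
      star_zero, sub_zero]
    noncomm_ring

noncomputable def rFst (a : ℍ[ℝ]) : ℍ[ℝ] := (1 / 2 : ℝ) • ((1 + qi) * (1 + a))

noncomputable def rSnd (b : ℍ[ℝ]) : ℍ[ℝ] := (1 / 2 : ℝ) • (b * (1 + qi))

lemma half_one_add_i_mul_one_add (ξ : Oct) :
    (1 / 2 : ℝ) • ((1 + i) * (1 + ξ)) = ⟨rFst ξ.x, rSnd ξ.y⟩ := by
  ext1 <;> simp [rFst, rSnd]

lemma normSq_one_add_qi : Quaternion.normSq (1 + qi) = 2 := by
  norm_num [Quaternion.normSq_def']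

lemma normSq_rFst {a : ℍ[ℝ]} (ha : a.re = 0) :
    Quaternion.normSq (rFst a) = (1 + Quaternion.normSq a) / 2 := by
  rw [rFst, Quaternion.normSq_smul, map_mul, normSq_one_add_qi, Quaternion.normSq_add]
  simp [ha]
  ring

lemma normSq_rSnd (b : ℍ[ℝ]) : Quaternion.normSq (rSnd b) = Quaternion.normSq b / 2 := by
  rw [rSnd, Quaternion.normSq_smul, map_mul, normSq_one_add_qi]
  ring

lemma rSnd_mul_qi_sub_one (b : ℍ[ℝ]) : rSnd b * (qi - 1) = -b := by
  ext <;> simp [rSnd] <;> ring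

lemma qi_mul_rFst_add_rFst_mul_qi {a : ℍ[ℝ]} (ha : a.re = 0) (haI : a.imI = 0) :
    qi * rFst a + rFst a * qi = qi - 1 := by
  ext <;> simp [rFst, ha, haI] <;> ring

lemma rFst_mul_qi_mul_star {a : ℍ[ℝ]} (ha : a.re = 0) (haI : a.imI = 0) :
    rFst a * qi * star (rFst a) = a + ((1 - Quaternion.normSq a) / 2) • qi := by
  ext <;> simp [rFst, ha, haI, Quaternion.normSq_def'] <;> ring

end Oct

/-- For a purely imaginary unit octonion `ξ` orthogonal to `i`, the octonion
`r_ξ = (1+i)(1+ξ)/2` is a unit octonion and `r_ξ i r̄_ξ = ξ`. -/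
theorem oct_translating_automorphism (ξ : Oct) (him : Oct.re ξ = 0)
    (hunit : Oct.normSq ξ = 1) (horth : Oct.inner ξ Oct.i = 0) :
    Oct.normSq ((1 / 2 : ℝ) • ((1 + Oct.i) * (1 + ξ))) = 1 ∧
    ((1 / 2 : ℝ) • ((1 + Oct.i) * (1 + ξ)) * Oct.i) *
        Oct.conj ((1 / 2 : ℝ) • ((1 + Oct.i) * (1 + ξ))) = ξ := by
  obtain ⟨a, b⟩ := ξ
  have ha : a.re = 0 := him
  have haI : a.imI = 0 := by rwa [Oct.inner_i] at horth
  have hab : Quaternion.normSq a + Quaternion.normSq b = 1 := by rwa [Oct.normSq_eq] at hunit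
  rw [Oct.half_one_add_i_mul_one_add]
  constructor
  · rw [Oct.normSq_eq, Oct.normSq_rFst ha, Oct.normSq_rSnd]
    linarith
  · rw [Oct.i_eq_mk, Oct.mul_mul_conj_of_star_eq_neg _ Oct.star_qi, Oct.rFst_mul_qi_mul_star ha haI,
      Oct.normSq_rSnd, Oct.qi_mul_rFst_add_rFst_mul_qi ha haI, Oct.rSnd_mul_qi_sub_one, neg_neg,
      show (1 - Quaternion.normSq a) / 2 = Quaternion.normSq b / 2 by linarith, add_sub_cancel_right]
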